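/- If E ⊆ ℝ is θ-thick for some θ ∈ (0,1), then its Barlow–Taylor macroscopic Hausdorff dimension satisfies Dim_H(E) ≥ 1 − θ. -/

import Mathlib

open Real Set

noncomputable section

/-- The `n`-th shell of a set `A ⊆ ℝ`. -/
def shell (n : ℕ) (A : Set ℝ) : Set ℝ :=
  A ∩ (Set.Ioc (-(Real.exp (n + 1))) (-(Real.exp n)) ∪ Set.Ico (Real.exp n) (Real.exp (n + 1)))

/-- The `ρ`-dimensional Hausdorff content of the `n`-th shell of `A`, computed with
cutoff `c₀`. -/
def nuCont (c₀ : ℝ) (n : ℕ) (ρ : ℝ) (A : Set ℝ) : ℝ :=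
  sInf {r : ℝ | ∃ (m : ℕ) (a b : Fin m → ℝ),
    (∀ i, c₀ ≤ b i - a i) ∧
    shell n A ⊆ ⋃ i, Set.Icc (a i) (b i) ∧
    r = ∑ i, ((b i - a i) / Real.exp n) ^ ρ}

/-- The Barlow–Taylor macroscopic Hausdorff dimension of `A` (with the convention
`c₀ = 1`). -/
def macroDimH (A : Set ℝ) : ℝ :=
  sInf {ρ : ℝ | 0 < ρ ∧ Summable fun n : ℕ => nuCont 1 n ρ A}

/-- The grid `Π_n(θ) = {e^n + j e^{nθ} : j ∈ ℤ, 0 ≤ j ≤ e^{n(1−θ)+1} − e^{n(1−θ)}}`. -/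
def thickGrid (θ : ℝ) (n : ℕ) : Set ℝ :=
  {x : ℝ | ∃ j : ℕ, (j : ℝ) ≤ Real.exp ((n : ℝ) * (1 - θ) + 1) - Real.exp ((n : ℝ) * (1 - θ)) ∧
    x = Real.exp n + (j : ℝ) * Real.exp ((n : ℝ) * θ)}

/-- A set `E ⊆ ℝ` is `θ`-thick if, for all sufficiently large `n`, it meets
`[x, x + e^{θn}]` for every grid point `x ∈ Π_n(θ)`. -/
def IsThick (θ : ℝ) (E : Set ℝ) : Prop :=
  ∃ M : ℕ, ∀ n : ℕ, M ≤ n → ∀ x ∈ thickGrid θ n,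
    (E ∩ Set.Icc x (x + Real.exp (θ * n))).Nonempty


/-!
For `ρ > 1`, covering the `n`-th shell by about `2e^{n+1}` unit intervals costs `O(e^{n(1-ρ)})`,
so the infimum defining the dimension is over a nonempty set. For `ρ < 1 - θ` a `θ`-thick set has, in the `n`-th shell,
`T = e^{n(1-θ)}` points in consecutive cells of width `h = e^{nθ}`. An interval of length
`L ≤ e^n` meets at most `L/h + 2` of them, and since `L/e^n ≤ (L/e^n)^ρ` and `1 ≤ L^ρ`, this is at
most `(T + 2e^{nρ}) (L/e^n)^ρ ≤ 2T (L/e^n)^ρ`. Hence every cover costs at least `1/2`, and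
`∑ ν_{n,ρ}(E)` diverges.
-/

def coverCosts (c₀ : ℝ) (n : ℕ) (ρ : ℝ) (A : Set ℝ) : Set ℝ :=
  {r : ℝ | ∃ (m : ℕ) (a b : Fin m → ℝ),
    (∀ i, c₀ ≤ b i - a i) ∧
    shell n A ⊆ ⋃ i, Set.Icc (a i) (b i) ∧
    r = ∑ i, ((b i - a i) / Real.exp n) ^ ρ}

theorem nuCont_eq_sInf_coverCosts (c₀ : ℝ) (n : ℕ) (ρ : ℝ) (A : Set ℝ) :
    nuCont c₀ n ρ A = sInf (coverCosts c₀ n ρ A) :=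
  rfl

section Counting

open Finset

theorem card_le_of_forall_natCast_mem_Icc {c d : ℝ} (hcd : c ≤ d) (s : Finset ℕ)
    (hs : ∀ j ∈ s, (j : ℝ) ∈ Icc c d) : (#s : ℝ) ≤ d - c + 1 := by
  have hsub : s ⊆ Finset.Icc ⌈c⌉₊ (⌈c⌉₊ + ⌊d - c⌋₊) := by
    intro j hj
    obtain ⟨hcj, hjd⟩ := hs j hj
    have hceil : ⌈c⌉₊ ≤ j := Nat.ceil_le.2 hcj
    have hdiff : j - ⌈c⌉₊ ≤ ⌊d - c⌋₊ := by
      apply Nat.le_floor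
      rw [Nat.cast_sub hceil]
      linarith [Nat.le_ceil c]
    rw [Finset.mem_Icc]
    omega
  have hcard : #s ≤ ⌊d - c⌋₊ + 1 := by
    have := Finset.card_le_card hsub
    rw [Nat.card_Icc] at this
    omega
  calc (#s : ℝ) ≤ ⌊d - c⌋₊ + 1 := by exact_mod_cast hcard
    _ ≤ d - c + 1 := by linarith [Nat.floor_le (sub_nonneg.2 hcd)]

variable {K : ℕ} {x₀ h : ℝ} {y : Fin K → ℝ}

theorem card_filter_mem_Icc_le (hh : 0 < h)
    (hy : ∀ j : Fin K, y j ∈ Icc (x₀ + j * h) (x₀ + j * h + h)) {a b : ℝ} (hab : a ≤ b) :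
    (#{j | y j ∈ Icc a b} : ℝ) ≤ (b - a) / h + 2 := by
  rw [← card_map Fin.valEmbedding]
  have hcd : (a - x₀) / h - 1 ≤ (b - x₀) / h := by
    have := div_le_div_of_nonneg_right (by linarith : a - x₀ ≤ b - x₀) hh.le
    linarith
  have hbound := card_le_of_forall_natCast_mem_Icc hcd
    (Finset.map Fin.valEmbedding {j | y j ∈ Icc a b}) ?_
  · calc _ ≤ (b - x₀) / h - ((a - x₀) / h - 1) + 1 := hbound
      _ = (b - a) / h + 2 := by field_simp; ring
  · simp only [mem_map, mem_filter_univ, Fin.valEmbedding_apply]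
    rintro _ ⟨j, ⟨hay, hyb⟩, rfl⟩
    obtain ⟨hlow, hup⟩ := hy j
    constructor
    · rw [sub_le_iff_le_add, div_le_iff₀ hh]; linarith
    · rw [le_div_iff₀ hh]; linarith

theorem card_le_sum_of_forall_mem_Icc (hh : 0 < h)
    (hy : ∀ j : Fin K, y j ∈ Icc (x₀ + j * h) (x₀ + j * h + h))
    {m : ℕ} {a b : Fin m → ℝ} (hab : ∀ i, a i ≤ b i) (hcov : ∀ j, ∃ i, y j ∈ Icc (a i) (b i)) :
    (K : ℝ) ≤ ∑ i, ((b i - a i) / h + 2) := by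
  have hsub : (univ : Finset (Fin K)) ⊆ univ.biUnion fun i => {j | y j ∈ Icc (a i) (b i)} := by
    intro j _
    simpa using hcov j
  calc (K : ℝ) = #(univ : Finset (Fin K)) := by simp
    _ ≤ ∑ i, (#{j | y j ∈ Icc (a i) (b i)} : ℝ) := by
      exact_mod_cast (Finset.card_le_card hsub).trans card_biUnion_le
    _ ≤ ∑ i, ((b i - a i) / h + 2) :=
      sum_le_sum fun i _ => card_filter_mem_Icc_le hh hy (hab i)

end Counting

theorem div_add_two_le_mul_rpow {h L R ρ : ℝ} (hh : 0 < h) (hL : 1 ≤ L) (hLR : L ≤ R)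
    (hρ₀ : 0 ≤ ρ) (hρ₁ : ρ ≤ 1) : L / h + 2 ≤ (R / h + 2 * R ^ ρ) * (L / R) ^ ρ := by
  have hR : 0 < R := by linarith
  have hself : L / R ≤ (L / R) ^ ρ :=
    Real.self_le_rpow_of_le_one (by positivity) ((div_le_one hR).2 hLR) hρ₁
  have hone : 1 ≤ R ^ ρ * (L / R) ^ ρ := by
    rw [Real.div_rpow (by linarith) hR.le, mul_div_cancel₀ _ (by positivity)]
    exact Real.one_le_rpow hL hρ₀
  calc L / h + 2 = R / h * (L / R) + 2 := by field_simp
    _ ≤ R / h * (L / R) ^ ρ + 2 * (R ^ ρ * (L / R) ^ ρ) := by gcongr; linarith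
    _ = (R / h + 2 * R ^ ρ) * (L / R) ^ ρ := by ring

section Cover

variable {c₀ : ℝ} {n : ℕ} {ρ : ℝ} {A : Set ℝ}

theorem nonneg_of_mem_coverCosts (hc₀ : 0 ≤ c₀) {r : ℝ} (hr : r ∈ coverCosts c₀ n ρ A) :
    0 ≤ r := by
  obtain ⟨m, a, b, hlen, -, rfl⟩ := hr
  exact Finset.sum_nonneg fun i _ =>
    Real.rpow_nonneg (div_nonneg (hc₀.trans (hlen i)) (Real.exp_pos _).le) _

theorem nuCont_nonneg (hc₀ : 0 ≤ c₀) : 0 ≤ nuCont c₀ n ρ A :=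
  Real.sInf_nonneg fun _ => nonneg_of_mem_coverCosts hc₀

theorem Icc_subset_iUnion_Icc_add_natCast (u v : ℝ) :
    Icc u v ⊆ ⋃ i : Fin (⌊v - u⌋₊ + 1), Icc (u + i) (u + i + 1) := by
  rintro x ⟨hux, hxv⟩
  have hk : ⌊x - u⌋₊ < ⌊v - u⌋₊ + 1 := Nat.lt_succ_of_le (Nat.floor_le_floor (by linarith))
  refine mem_iUnion.2 ⟨⟨⌊x - u⌋₊, hk⟩, ?_, ?_⟩
  · linarith [Nat.floor_le (sub_nonneg.2 hux)]
  · linarith [Nat.lt_floor_add_one (x - u)]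

theorem shell_subset_Icc (n : ℕ) (A : Set ℝ) :
    shell n A ⊆ Icc (-Real.exp (n + 1)) (Real.exp (n + 1)) := by
  have hmono : Real.exp n ≤ Real.exp (n + 1) := Real.exp_le_exp.2 (by linarith)
  rintro x ⟨-, ⟨hlow, hup⟩ | ⟨hlow, hup⟩⟩ <;> constructor <;>
    linarith [Real.exp_pos (n : ℝ)]

theorem unit_cover_mem_coverCosts (n : ℕ) (ρ : ℝ) (A : Set ℝ) :
    (⌊2 * Real.exp (n + 1)⌋₊ + 1 : ℕ) * (1 / Real.exp n) ^ ρ ∈ coverCosts 1 n ρ A := by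
  have hcover := (shell_subset_Icc n A).trans
    (Icc_subset_iUnion_Icc_add_natCast (-Real.exp (n + 1)) (Real.exp (n + 1)))
  rw [sub_neg_eq_add, ← two_mul] at hcover
  refine ⟨_, fun i => -Real.exp (n + 1) + i, fun i => -Real.exp (n + 1) + i + 1,
    fun i => by simp, hcover, ?_⟩
  simp

theorem nuCont_one_le (n : ℕ) (ρ : ℝ) (A : Set ℝ) :
    nuCont 1 n ρ A ≤ (⌊2 * Real.exp (n + 1)⌋₊ + 1 : ℕ) * (1 / Real.exp n) ^ ρ :=
  csInf_le ⟨0, fun _ => nonneg_of_mem_coverCosts zero_le_one⟩ (unit_cover_mem_coverCosts n ρ A)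

theorem summable_nuCont_one_of_one_lt (A : Set ℝ) (hρ : 1 < ρ) :
    Summable fun n : ℕ => nuCont 1 n ρ A := by
  have hgeom : Summable fun n : ℕ => 3 * Real.exp 1 * Real.exp (1 - ρ) ^ n :=
    (summable_geometric_of_lt_one (Real.exp_pos _).le (Real.exp_lt_one_iff.2 (by linarith))).mul_left _
  refine hgeom.of_nonneg_of_le (fun n => nuCont_nonneg zero_le_one) fun n => ?_
  have hexp : 1 ≤ Real.exp (n + 1) := Real.one_le_exp (by positivity)
  have hcount : ((⌊2 * Real.exp (n + 1)⌋₊ + 1 : ℕ) : ℝ) ≤ 3 * Real.exp (n + 1) := by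
    push_cast
    linarith [Nat.floor_le (by positivity : (0 : ℝ) ≤ 2 * Real.exp (n + 1))]
  calc nuCont 1 n ρ A ≤ (⌊2 * Real.exp (n + 1)⌋₊ + 1 : ℕ) * (1 / Real.exp n) ^ ρ :=
        nuCont_one_le n ρ A
    _ ≤ 3 * Real.exp (n + 1) * (1 / Real.exp n) ^ ρ := by gcongr
    _ = 3 * Real.exp 1 * Real.exp (1 - ρ) ^ n := by
      rw [one_div, ← Real.exp_neg, ← Real.exp_mul, ← Real.exp_nat_mul, mul_assoc, mul_assoc,
        ← Real.exp_add, ← Real.exp_add]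
      ring_nf

end Cover

theorem le_macroDimH {A : Set ℝ} {d : ℝ}
    (h : ∀ ρ, 0 < ρ → ρ < d → ¬Summable fun n : ℕ => nuCont 1 n ρ A) : d ≤ macroDimH A :=
  le_csInf ⟨2, two_pos, summable_nuCont_one_of_one_lt A one_lt_two⟩ fun ρ ⟨hρ₀, hρ⟩ =>
    not_lt.1 fun hlt => h ρ hρ₀ hlt hρ

theorem exp_eq_exp_mul_one_sub_mul_exp_mul (x θ : ℝ) :
    Real.exp x = Real.exp (x * (1 - θ)) * Real.exp (x * θ) := by
  rw [← Real.exp_add]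
  ring_nf

section Thick

variable {θ : ℝ} {n : ℕ} {E : Set ℝ}

theorem exists_shell_points_of_forall_thickGrid
    (hthick : ∀ x ∈ thickGrid θ n, (E ∩ Icc x (x + Real.exp (θ * n))).Nonempty)
    (hT : 2 ≤ Real.exp (n * (1 - θ))) :
    ∃ y : Fin ⌈Real.exp (n * (1 - θ))⌉₊ → ℝ, ∀ j, y j ∈ shell n E ∧
      y j ∈ Icc (Real.exp n + j * Real.exp (n * θ)) (Real.exp n + j * Real.exp (n * θ) +
        Real.exp (n * θ)) := by
  set T := Real.exp (n * (1 - θ))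
  set h := Real.exp (n * θ)
  have hh : 0 < h := Real.exp_pos _
  have hsplit : Real.exp n = T * h := exp_eq_exp_mul_one_sub_mul_exp_mul n θ
  have hnext : Real.exp (n + 1) = Real.exp 1 * T * h := by
    rw [Real.exp_add, hsplit]
    ring
  have hgrid : Real.exp (n * (1 - θ) + 1) - T = (Real.exp 1 - 1) * T := by
    rw [Real.exp_add]
    ring
  have he : 2.7 < Real.exp 1 := by linarith [Real.exp_one_gt_d9]
  have hpoint : ∀ j : Fin ⌈T⌉₊, ∃ y, y ∈ shell n E ∧
      y ∈ Icc (Real.exp n + j * h) (Real.exp n + j * h + h) := by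
    intro j
    have hjT : ((j : ℕ) : ℝ) < T := Nat.lt_ceil.1 j.2
    obtain ⟨y, hyE, hy⟩ := hthick _ ⟨j, by rw [hgrid]; nlinarith, rfl⟩
    rw [mul_comm θ] at hy
    refine ⟨y, ⟨hyE, Or.inr ⟨?_, ?_⟩⟩, hy⟩
    · nlinarith [hy.1, Nat.cast_nonneg (α := ℝ) j]
    -- the last cell ends before `e^{n+1}` because `T + 1 < (e - 1) T` once `T ≥ 2`
    · have hcells : T + j + 1 < Real.exp 1 * T := by nlinarith
      calc y ≤ (T + j + 1) * h := by linarith [hy.2]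
        _ < Real.exp 1 * T * h := mul_lt_mul_of_pos_right hcells hh
        _ = Real.exp (n + 1) := hnext.symm
  choose y hy using hpoint
  exact ⟨y, hy⟩

theorem half_le_nuCont_of_forall_thickGrid {ρ : ℝ}
    (hthick : ∀ x ∈ thickGrid θ n, (E ∩ Icc x (x + Real.exp (θ * n))).Nonempty)
    (hρ₀ : 0 < ρ) (hρ₁ : ρ ≤ 1) (hρT : 2 * Real.exp (n * ρ) ≤ Real.exp (n * (1 - θ))) :
    1 / 2 ≤ nuCont 1 n ρ E := by
  set T := Real.exp (n * (1 - θ))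
  set h := Real.exp (n * θ)
  have hT : 2 ≤ T := by linarith [Real.one_le_exp (by positivity : 0 ≤ (n : ℝ) * ρ)]
  have hh : 0 < h := Real.exp_pos _
  have hsplit : Real.exp n = T * h := exp_eq_exp_mul_one_sub_mul_exp_mul n θ
  obtain ⟨y, hy⟩ := exists_shell_points_of_forall_thickGrid hthick hT
  rw [nuCont_eq_sInf_coverCosts]
  refine le_csInf ⟨_, unit_cover_mem_coverCosts n ρ E⟩ ?_
  rintro _ ⟨m, a, b, hlen, hcov, rfl⟩
  have hterm : ∀ i, 0 ≤ ((b i - a i) / Real.exp n) ^ ρ := fun i =>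
    Real.rpow_nonneg (div_nonneg (by linarith [hlen i]) (Real.exp_pos _).le) _
  by_cases hbig : ∃ i, Real.exp n ≤ b i - a i
  · obtain ⟨i, hi⟩ := hbig
    calc 1 / 2 ≤ (1 : ℝ) := by norm_num
      _ ≤ ((b i - a i) / Real.exp n) ^ ρ :=
        Real.one_le_rpow ((one_le_div (Real.exp_pos _)).2 hi) hρ₀.le
      _ ≤ ∑ i, ((b i - a i) / Real.exp n) ^ ρ :=
        Finset.single_le_sum (fun i _ => hterm i) (Finset.mem_univ i)
  push Not at hbig
  have hcount : (⌈T⌉₊ : ℝ) ≤ ∑ i, ((b i - a i) / h + 2) :=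
    card_le_sum_of_forall_mem_Icc hh (fun j => (hy j).2)
      (fun i => by linarith [hlen i]) (fun j => mem_iUnion.1 (hcov (hy j).1))
  have hcost : ∑ i, ((b i - a i) / h + 2) ≤ 2 * T * ∑ i, ((b i - a i) / Real.exp n) ^ ρ := by
    rw [Finset.mul_sum]
    refine Finset.sum_le_sum fun i _ => ?_
    calc (b i - a i) / h + 2
        ≤ (Real.exp n / h + 2 * Real.exp n ^ ρ) * ((b i - a i) / Real.exp n) ^ ρ :=
          div_add_two_le_mul_rpow (Real.exp_pos _) (hlen i) (hbig i).le hρ₀.le hρ₁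
      _ ≤ 2 * T * ((b i - a i) / Real.exp n) ^ ρ := by
          refine mul_le_mul_of_nonneg_right ?_ (hterm i)
          rw [hsplit, mul_div_cancel_right₀ _ hh.ne', ← hsplit, ← Real.exp_mul]
          linarith
  nlinarith [Nat.le_ceil T]

theorem eventually_half_le_nuCont {ρ : ℝ} (hE : IsThick θ E) (hθ : 0 < θ) (hρ₀ : 0 < ρ)
    (hρ : ρ < 1 - θ) : ∀ᶠ n : ℕ in Filter.atTop, 1 / 2 ≤ nuCont 1 n ρ E := by
  obtain ⟨M, hM⟩ := hE
  have hgap : Filter.Tendsto (fun n : ℕ => Real.exp (n * (1 - θ - ρ))) Filter.atTop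
      Filter.atTop :=
    Real.tendsto_exp_atTop.comp (tendsto_natCast_atTop_atTop.atTop_mul_const (by linarith))
  filter_upwards [Filter.eventually_ge_atTop M, hgap.eventually_ge_atTop 2] with n hn hn2
  refine half_le_nuCont_of_forall_thickGrid (hM n hn) hρ₀ (by linarith) ?_
  calc 2 * Real.exp (n * ρ) ≤ Real.exp (n * (1 - θ - ρ)) * Real.exp (n * ρ) := by gcongr
    _ = Real.exp (n * (1 - θ)) := by rw [← Real.exp_add]; ring_nf

end Thick

/-- If `E ⊆ ℝ` is `θ`-thick for some `θ ∈ (0,1)`, then its Barlow–Taylor macroscopic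
Hausdorff dimension is at least `1 − θ`. -/
theorem macroDimH_ge_of_thick (θ : ℝ) (hθ : θ ∈ Set.Ioo (0 : ℝ) 1) (E : Set ℝ)
    (hE : IsThick θ E) : 1 - θ ≤ macroDimH E := by
  refine le_macroDimH fun ρ hρ₀ hρ hsum => ?_
  obtain ⟨n, hlarge, hsmall⟩ := ((eventually_half_le_nuCont hE hθ.1 hρ₀ hρ).and
    (hsum.tendsto_atTop_zero.eventually_lt_const one_half_pos)).exists
  linarith
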